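/- With the data below, suppose w : ℝ → ℝ^{2N+1} is differentiable, w(t, i) > 0 for all t ∈ [0, T] and all i ∈ {0, …, 2N}, and w satisfies the linear system ∂ₜ w(t, i) − k·P_i·w(t, i) + a_i·w(t, i+1)·[i < 2N] + b_i·w(t, i−1)·[i > 0] = 0 for all t ∈ [0, T] and all i, together with w(T, i) = 1, where a_i := λ⁺·exp(−k·s·Δ⁺_i − 1)·exp(k·Z⁺_i·Δ⁺_i) and b_i := λ⁻·exp(k·s·Δ⁻_i − 1)·exp(−k·Z⁻_i·Δ⁻_i). Then the function g(t, i) := (1/k)·log w(t, i) satisfies g(T, i) = 0 and, for all t ∈ [0, T] and all i ∈ {0, …, 2N}: ∂ₜ g(t, i) − P_i + (λ⁺/k)·exp(−k·s·Δ⁺_i − 1)·exp(k·Z⁺_i·Δ⁺_i)·exp(k·(g(t, i+1) − g(t, i)))·[i < 2N] + (λ⁻/k)·exp(k·s·Δ⁻_i − 1)·exp(−k·Z⁻_i·Δ⁻_i)·exp(k·(g(t, i−1) − g(t, i)))·[i > 0] = 0. -/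

import Mathlib

/-!
With `g = (1/k) log w` one has `∂ₜ g = ∂ₜ w / (k w)` and `exp (k (g j - g i)) = w j / w i`, so
the equation for `g` at node `i` is the linear equation for `w` at node `i` divided by `k · w i`.
-/

open Real

lemma exp_mul_sub_inv_mul_log {k a b : ℝ} (hk : k ≠ 0) (ha : 0 < a) (hb : 0 < b) :
    exp (k * (1 / k * log a - 1 / k * log b)) = a / b := by
  rw [← mul_sub, ← mul_assoc, mul_one_div_cancel hk, one_mul, exp_sub, exp_log ha, exp_log hb]

lemma deriv_inv_mul_log {f : ℝ → ℝ} {t : ℝ} (k : ℝ) (hf : DifferentiableAt ℝ f t) (ht : f t ≠ 0) :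
    deriv (fun τ => 1 / k * log (f τ)) t = 1 / k * (deriv f t / f t) := by
  rw [deriv_const_mul _ (hf.log ht), deriv.log hf ht]

/-- The substitution `g = (1/k) log w` linearizes the AMM HJB equation: if `w` is a
positive differentiable solution of the linear system with terminal value 1, then
`g` solves the (exponential) HJB equation with terminal value 0. -/
theorem stmt5 (N : ℕ) (Δp Δm Zp Zm P : Fin (2 * N + 1) → ℝ)
    (lp lm k s T : ℝ) (hk : 0 < k)
    (w : ℝ → Fin (2 * N + 1) → ℝ)
    (hdiff : Differentiable ℝ w)
    (hpos : ∀ t ∈ Set.Icc (0 : ℝ) T, ∀ i : Fin (2 * N + 1), 0 < w t i)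
    (hsys : ∀ t ∈ Set.Icc (0 : ℝ) T, ∀ i : Fin (2 * N + 1),
      deriv (fun τ : ℝ => w τ i) t - k * P i * w t i
        + (if h : (i : ℕ) < 2 * N then
            lp * Real.exp (-(k * s * Δp i) - 1) * Real.exp (k * Zp i * Δp i)
              * w t ⟨(i : ℕ) + 1, by omega⟩
          else 0)
        + (if h : 0 < (i : ℕ) then
            lm * Real.exp (k * s * Δm i - 1) * Real.exp (-(k * Zm i * Δm i))
              * w t ⟨(i : ℕ) - 1, by omega⟩
          else 0) = 0)
    (hterm : ∀ i : Fin (2 * N + 1), w T i = 1)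
    (g : ℝ → Fin (2 * N + 1) → ℝ)
    (hg : ∀ t : ℝ, ∀ i : Fin (2 * N + 1), g t i = (1 / k) * Real.log (w t i)) :
    (∀ i : Fin (2 * N + 1), g T i = 0) ∧
    (∀ t ∈ Set.Icc (0 : ℝ) T, ∀ i : Fin (2 * N + 1),
      deriv (fun τ : ℝ => g τ i) t - P i
        + (if h : (i : ℕ) < 2 * N then
            (lp / k) * Real.exp (-(k * s * Δp i) - 1) * Real.exp (k * Zp i * Δp i)
              * Real.exp (k * (g t ⟨(i : ℕ) + 1, by omega⟩ - g t i))
          else 0)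
        + (if h : 0 < (i : ℕ) then
            (lm / k) * Real.exp (k * s * Δm i - 1) * Real.exp (-(k * Zm i * Δm i))
              * Real.exp (k * (g t ⟨(i : ℕ) - 1, by omega⟩ - g t i))
          else 0) = 0) := by
  refine ⟨fun i => by rw [hg, hterm, log_one, mul_zero], fun t ht i => ?_⟩
  have hwi : 0 < w t i := hpos t ht i
  have hexp : ∀ j, exp (k * (1 / k * log (w t j) - 1 / k * log (w t i))) = w t j / w t i :=
    fun j => exp_mul_sub_inv_mul_log hk.ne' (hpos t ht j) hwi
  simp only [hg, hexp]
  rw [deriv_inv_mul_log k (differentiableAt_pi.1 (hdiff t) i) hwi.ne']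
  have hlin := hsys t ht i
  split_ifs at hlin ⊢ <;> linear_combination (norm := (field_simp; ring)) hlin / (k * w t i)
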